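/- arXiv:1109.3405 — 2 statements merged into one kernel-verified Lean document; each statement's English description precedes it below -/
import Mathlib

section
/- Let m, n be positive integers and let φ : (ℤ/mℤ)ⁿ → A be a surjective homomorphism onto a finite abelian group A. Then there exist a matrix g ∈ GL_n(ℤ) and positive integers d₁ ∣ d₂ ∣ ⋯ ∣ d_n with each d_i ∣ m, together with an isomorphism A ≅ ℤ/(m/d₁)ℤ ⊕ ⋯ ⊕ ℤ/(m/d_n)ℤ, such that φ composed with the automorphism of (ℤ/mℤ)ⁿ induced by g becomes the componentwise reduction map (x₁,…,x_n) ↦ (x₁ mod m/d₁, …, x_n mod m/d_n). -/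
/-!
Pulling `φ` back along the reduction `ℤⁿ → (ℤ/mℤ)ⁿ` gives a surjection `ψ : ℤⁿ → A` whose kernel
`K` contains `mℤⁿ`. By the Smith normal form, an automorphism `F` of `ℤⁿ` carries `K` onto a
diagonal lattice `∏ cᵢℤ` with `cᵢ ∣ m`, and since `aℤ × bℤ` and `lcm(a,b)ℤ × gcd(a,b)ℤ` differ by
an element of `GL₂(ℤ)`, the `cᵢ` may be taken to form a divisibility chain `cₙ ∣ ⋯ ∣ c₁`. Then
`ψ ∘ F` and the reduction `ℤⁿ → ∏ ℤ/cᵢℤ` have the same kernel, so `A ≅ ∏ ℤ/cᵢℤ` compatibly;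
take `dᵢ = m / cᵢ` and `g` the matrix of `F`.
-/

namespace Submodule

variable {R M : Type*} [Semiring R] [AddCommMonoid M] [Module R M]

def SameAutOrbit (K L : Submodule R M) : Prop :=
  ∃ F : M ≃ₗ[R] M, K.comap F.toLinearMap = L

theorem SameAutOrbit.refl (K : Submodule R M) : K.SameAutOrbit K :=
  ⟨LinearEquiv.refl R M, by ext; simp⟩

theorem SameAutOrbit.trans {K L N : Submodule R M} :
    K.SameAutOrbit L → L.SameAutOrbit N → K.SameAutOrbit N
  | ⟨F, hF⟩, ⟨G, hG⟩ => ⟨G.trans F, by ext; simp [← hG, ← hF]⟩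

end Submodule

def diagLattice {ι : Type*} (c : ι → ℕ) : Submodule ℤ (ι → ℤ) :=
  Submodule.pi Set.univ fun i => Ideal.span {(c i : ℤ)}

@[simp]
theorem mem_diagLattice {ι : Type*} {c : ι → ℕ} {y : ι → ℤ} :
    y ∈ diagLattice c ↔ ∀ i, (c i : ℤ) ∣ y i := by
  simp [diagLattice, Ideal.mem_span_singleton]

theorem Submodule.finrank_eq_of_smul_mem {ι : Type*} [Fintype ι] {K : Submodule ℤ (ι → ℤ)}
    {m : ℤ} (hm : m ≠ 0) (hK : ∀ y, m • y ∈ K) :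
    Module.finrank ℤ K = Module.finrank ℤ (ι → ℤ) :=
  le_antisymm (Submodule.finrank_le K) <|
    ((LinearMap.lsmul ℤ _ m).codRestrict K hK).finrank_le_finrank_of_injective <|
      (LinearMap.lsmul_injective hm).codRestrict _

theorem Submodule.exists_sameAutOrbit_diagLattice {ι : Type*} [Fintype ι]
    {K : Submodule ℤ (ι → ℤ)} {m : ℕ} (hm : m ≠ 0) (hK : ∀ y, (m : ℤ) • y ∈ K) :
    ∃ c : ι → ℕ, (∀ i, c i ∣ m) ∧ K.SameAutOrbit (diagLattice c) := by
  obtain ⟨b, a, ab, hab⟩ := Submodule.exists_smith_normal_form_of_rank_eq (Pi.basisFun ℤ ι)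
    (finrank_eq_of_smul_mem (Int.natCast_ne_zero.mpr hm) hK)
  have hmem : ∀ y, b.equivFun.symm y ∈ K ↔ ∀ i, a i ∣ y i := by
    intro y
    simp only [ab.mem_submodule_iff', hab, smul_smul, Module.Basis.equivFun_symm_apply]
    constructor
    · rintro ⟨z, hz⟩ i
      have hzi := congrArg (b.repr · i) hz
      simp only [b.repr_sum_self] at hzi
      exact ⟨z i, by rw [hzi, mul_comm]⟩
    · intro hy
      choose z hz using hy
      exact ⟨z, by simp only [hz, mul_comm]⟩
  refine ⟨fun i => (a i).natAbs, fun i => ?_, b.equivFun.symm, ?_⟩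
  · classical
    have ha := (hmem ((m : ℤ) • Pi.single i 1)).mp
      (by rw [map_smul, Basis.equivFun_symm_single]; exact hK (b i)) i
    exact Int.natCast_dvd_natCast.mp (Int.natAbs_dvd.mpr (by simpa using ha))
  · ext y
    rw [mem_comap, mem_diagLattice]
    exact (hmem y).trans (forall_congr' fun i => Int.natAbs_dvd.symm)

theorem Submodule.SameAutOrbit.diagLattice_cons {n : ℕ} (a : ℕ) {t t' : Fin n → ℕ}
    (h : (diagLattice t).SameAutOrbit (diagLattice t')) :
    (diagLattice (Fin.cons a t : Fin (n + 1) → ℕ)).SameAutOrbit (diagLattice (Fin.cons a t')) := by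
  obtain ⟨F, hF⟩ := h
  let E := Fin.consLinearEquiv ℤ fun _ : Fin (n + 1) => ℤ
  refine ⟨E.symm.trans (((LinearEquiv.refl ℤ ℤ).prodCongr F).trans E), ?_⟩
  ext y
  have hy := SetLike.ext_iff.mp hF (Fin.tail y)
  simp only [Submodule.mem_comap, mem_diagLattice, LinearEquiv.coe_coe] at hy
  simp [E, Fin.forall_fin_succ, Fin.consEquiv, hy, Fin.tail]

def Fin.firstTwoLinearEquiv {R : Type*} [CommRing R] {n : ℕ} (p q r s : R)
    (h : p * s - q * r = 1) : (Fin (n + 2) → R) ≃ₗ[R] (Fin (n + 2) → R) where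
  toFun y := Fin.cons (p * y 0 + q * y 1) (Fin.cons (r * y 0 + s * y 1) fun i => y i.succ.succ)
  invFun y := Fin.cons (s * y 0 - q * y 1) (Fin.cons (p * y 1 - r * y 0) fun i => y i.succ.succ)
  map_add' y z := by
    funext i
    refine Fin.cases ?_ (Fin.cases ?_ fun i => ?_) i <;>
      simp only [Pi.add_apply, Fin.succ_zero_eq_one, Fin.cons_zero, Fin.cons_one, Fin.cons_succ] <;>
      ring
  map_smul' c y := by
    funext i
    refine Fin.cases ?_ (Fin.cases ?_ fun i => ?_) i <;>
      simp only [Pi.smul_apply, smul_eq_mul, RingHom.id_apply, Fin.succ_zero_eq_one, Fin.cons_zero,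
        Fin.cons_one, Fin.cons_succ] <;>
      ring
  left_inv y := by
    funext i
    refine Fin.cases ?_ (Fin.cases ?_ fun i => ?_) i <;>
      simp only [Fin.succ_zero_eq_one, Fin.cons_zero, Fin.cons_one, Fin.cons_succ]
    · linear_combination y 0 * h
    · linear_combination y 1 * h
  right_inv y := by
    funext i
    refine Fin.cases ?_ (Fin.cases ?_ fun i => ?_) i <;>
      simp only [Fin.succ_zero_eq_one, Fin.cons_zero, Fin.cons_one, Fin.cons_succ]
    · linear_combination y 0 * h
    · linear_combination y 1 * h

theorem Nat.exists_gcd_mul_cofactors (a b : ℕ) : ∃ a' b' u v : ℤ,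
    (a : ℤ) = a.gcd b * a' ∧ (b : ℤ) = a.gcd b * b' ∧ (a.lcm b : ℤ) = a.gcd b * a' * b' ∧
      u * a' + v * b' = 1 := by
  obtain ⟨a', b', hcop, ha, hb⟩ := Nat.exists_coprime a b
  obtain ⟨u, v, huv⟩ := Nat.isCoprime_iff_coprime.mpr hcop
  have hl : a.lcm b = a.gcd b * a' * b' := by
    rcases Nat.eq_zero_or_pos (a.gcd b) with hg | hg
    · simp [Nat.gcd_eq_zero_iff.mp hg]
    · apply Nat.eq_of_mul_eq_mul_left hg
      rw [Nat.gcd_mul_lcm]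
      set g := a.gcd b
      rw [ha, hb]
      ring
  exact ⟨a', b', u, v, by rw [mul_comm]; exact_mod_cast ha, by rw [mul_comm]; exact_mod_cast hb,
    by exact_mod_cast hl, huv⟩

theorem Int.dvd_and_dvd_iff_of_bezout {g a' b' u v y₀ y₁ : ℤ} (h : u * a' + v * b' = 1) :
    (g * a' ∣ v * y₀ - a' * y₁ ∧ g * b' ∣ u * y₀ + b' * y₁) ↔ (g * a' * b' ∣ y₀ ∧ g ∣ y₁) := by
  constructor
  · rintro ⟨⟨w₀, hw₀⟩, ⟨w₁, hw₁⟩⟩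
    exact ⟨⟨w₀ + w₁, by linear_combination -y₀ * h + b' * hw₀ + a' * hw₁⟩,
      ⟨v * b' * w₁ - u * a' * w₀, by linear_combination -y₁ * h - u * hw₀ + v * hw₁⟩⟩
  · rintro ⟨⟨w₀, rfl⟩, ⟨w₁, rfl⟩⟩
    exact ⟨⟨v * b' * w₀ - w₁, by ring⟩, ⟨u * a' * w₀ + w₁, by ring⟩⟩

/-- Writing `a = g a'`, `b = g b'` with `g = gcd a b` and `u a' + v b' = 1`, the automorphism is
`[[v, -a'], [u, b']]` on the first two coordinates. -/
theorem sameAutOrbit_diagLattice_lcm_gcd {n : ℕ} (a b : ℕ) (t : Fin n → ℕ) :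
    (diagLattice (Fin.cons a (Fin.cons b t) : Fin (n + 2) → ℕ)).SameAutOrbit
      (diagLattice (Fin.cons (a.lcm b) (Fin.cons (a.gcd b) t))) := by
  obtain ⟨a', b', u, v, ha, hb, hl, huv⟩ := Nat.exists_gcd_mul_cofactors a b
  refine ⟨Fin.firstTwoLinearEquiv v (-a') u b' (by linear_combination huv), ?_⟩
  ext y
  simp [Fin.firstTwoLinearEquiv, Fin.forall_fin_succ, ha, hb, hl, ← and_assoc, ← sub_eq_add_neg,
    Int.dvd_and_dvd_iff_of_bezout huv]

def DvdAntitone {ι α : Type*} [Preorder ι] [Monoid α] (c : ι → α) : Prop :=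
  ∀ i j, i ≤ j → c j ∣ c i

theorem DvdAntitone.cons {α : Type*} [Monoid α] {n : ℕ} {x : α} {s : Fin n → α}
    (hs : DvdAntitone s) (hx : ∀ j, s j ∣ x) : DvdAntitone (Fin.cons x s : Fin (n + 1) → α) := by
  intro i j hij
  cases i using Fin.cases with
  | zero => cases j using Fin.cases with
    | zero => exact dvd_rfl
    | succ j => simpa using hx j
  | succ i => cases j using Fin.cases with
    | zero => exact absurd hij (by simp)
    | succ j => simpa using hs i j (Fin.succ_le_succ_iff.mp hij)

/-- Sort the tail to `t`, replace `c 0, t 0` by their `lcm` and `gcd`, and sort all but the `lcm`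
again. The last conclusion is what shows the second sort stays below `t 0`. -/
theorem exists_dvdAntitone_sameAutOrbit_diagLattice {n : ℕ} (c : Fin n → ℕ) :
    ∃ c' : Fin n → ℕ, (diagLattice c).SameAutOrbit (diagLattice c') ∧
      DvdAntitone c' ∧ ∀ M, (∀ i, c i ∣ M) → ∀ i, c' i ∣ M := by
  induction n with
  | zero => exact ⟨c, .refl _, fun i => i.elim0, fun _ _ i => i.elim0⟩
  | succ n ih =>
    cases n with
    | zero =>
      exact ⟨c, .refl _, fun i j _ => by rw [Subsingleton.elim (α := Fin 1) i j], fun _ hM => hM⟩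
    | succ n =>
      obtain ⟨t, ht, ht_chain, ht_dvd⟩ := ih (Fin.tail c)
      obtain ⟨s, hs, hs_chain, hs_dvd⟩ := ih (Fin.cons ((c 0).gcd (t 0)) (Fin.tail t))
      have hs_t : ∀ j, s j ∣ t 0 := hs_dvd _ fun i => i.cases (Nat.gcd_dvd_right _ _)
        fun j => ht_chain 0 j.succ (Fin.zero_le _)
      refine ⟨Fin.cons ((c 0).lcm (t 0)) s, ?_, hs_chain.cons
        fun j => (hs_t j).trans (Nat.dvd_lcm_right _ _), fun M hM => ?_⟩
      · have hct := ht.diagLattice_cons (c 0)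
        have hlg := sameAutOrbit_diagLattice_lcm_gcd (c 0) (t 0) (Fin.tail t)
        rw [Fin.cons_self_tail] at hct hlg
        exact hct.trans (hlg.trans (hs.diagLattice_cons _))
      · have htM := ht_dvd M fun i => hM i.succ
        exact Fin.cases (Nat.lcm_dvd (hM 0) (htM 0)) fun j => (hs_t j).trans (htM 0)

theorem Submodule.exists_sameAutOrbit_diagLattice_dvdAntitone {n : ℕ}
    {K : Submodule ℤ (Fin n → ℤ)} {m : ℕ} (hm : m ≠ 0) (hK : ∀ y, (m : ℤ) • y ∈ K) :
    ∃ c : Fin n → ℕ, (∀ i, c i ∣ m) ∧ DvdAntitone c ∧ K.SameAutOrbit (diagLattice c) := by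
  obtain ⟨c, hcm, hKc⟩ := exists_sameAutOrbit_diagLattice hm hK
  obtain ⟨c', hcc', hc'_chain, hc'_dvd⟩ := exists_dvdAntitone_sameAutOrbit_diagLattice c
  exact ⟨c', hc'_dvd m hcm, hc'_chain, hKc.trans hcc'⟩

def diagReduction {ι : Type*} (c : ι → ℕ) : (ι → ℤ) →+ ((i : ι) → ZMod (c i)) where
  toFun y i := y i
  map_zero' := by ext; simp
  map_add' _ _ := by ext; simp

theorem diagReduction_surjective {ι : Type*} (c : ι → ℕ) :
    Function.Surjective (diagReduction c) :=
  fun z => ⟨fun i => (z i).cast, funext fun i => ZMod.intCast_zmod_cast (z i)⟩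

theorem mem_ker_diagReduction {ι : Type*} {c : ι → ℕ} {y : ι → ℤ} :
    y ∈ (diagReduction c).ker ↔ y ∈ diagLattice c := by
  simp [diagReduction, AddMonoidHom.mem_ker, funext_iff, ZMod.intCast_zmod_eq_zero_iff_dvd]

theorem AddMonoidHom.exists_addEquiv_apply_eq_of_ker_eq {G A B : Type*} [AddGroup G]
    [AddGroup A] [AddGroup B] {p : G →+ A} {q : G →+ B} (hp : Function.Surjective p)
    (hq : Function.Surjective q) (h : p.ker = q.ker) : ∃ e : A ≃+ B, ∀ x, e (p x) = q x :=
  ⟨(QuotientAddGroup.quotientKerEquivOfSurjective p hp).symm.trans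
      ((QuotientAddGroup.quotientAddEquivOfEq h).trans
        (QuotientAddGroup.quotientKerEquivOfSurjective q hq)), fun x => by
    have hx : (QuotientAddGroup.quotientKerEquivOfSurjective p hp).symm (p x) = (x : G ⧸ p.ker) :=
      (AddEquiv.symm_apply_eq _).mpr rfl
    rw [AddEquiv.trans_apply, AddEquiv.trans_apply, hx]
    rfl⟩

theorem Matrix.GeneralLinearGroup.exists_mulVec_eq {ι R : Type*} [Fintype ι] [DecidableEq ι]
    [CommRing R] (F : (ι → R) ≃ₗ[R] (ι → R)) :
    ∃ g : GL ι R, ∀ y, (g : Matrix ι ι R).mulVec y = F y :=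
  ⟨toLin.symm ((LinearMap.GeneralLinearGroup.generalLinearEquiv R _).symm F),
    LinearMap.toMatrix'_mulVec F.toLinearMap⟩

theorem surjection_from_zmod_pow_normal_form_general
    (m n : ℕ) (hm : 0 < m)
    (A : Type*) [AddCommGroup A]
    (φ : (Fin n → ZMod m) →+ A) (hφ : Function.Surjective ⇑φ) :
    ∃ (g : Matrix.GeneralLinearGroup (Fin n) ℤ) (d : Fin n → ℕ),
      (∀ i, 0 < d i) ∧ (∀ i j : Fin n, i ≤ j → d i ∣ d j) ∧
      ∃ (hdm : ∀ i, d i ∣ m) (e : A ≃+ ((i : Fin n) → ZMod (m / d i))),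
        ∀ (x : Fin n → ZMod m) (i : Fin n),
          e (φ (((g : Matrix (Fin n) (Fin n) ℤ).map
              (Int.cast : ℤ → ZMod m)).mulVec x)) i
            = ZMod.castHom (Nat.div_dvd_of_dvd (hdm i)) (ZMod (m / d i)) (x i) := by
  let π : (Fin n → ℤ) →+ (Fin n → ZMod m) := (Int.castAddHom (ZMod m)).compLeft (Fin n)
  have hπ : Function.Surjective π := ZMod.intCast_surjective.comp_left
  let ψ := φ.comp π
  have hmψ : ∀ y, (m : ℤ) • y ∈ ψ.toIntLinearMap.ker := fun y => by
    have : π ((m : ℤ) • y) = 0 := by ext; simp [π]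
    exact (congrArg φ this).trans φ.map_zero
  obtain ⟨c, hcm, hc_chain, F, hF⟩ :=
    Submodule.exists_sameAutOrbit_diagLattice_dvdAntitone hm.ne' hmψ
  have hmd : (fun i => m / (m / c i)) = c := funext fun i => Nat.div_div_self (hcm i) hm.ne'
  rw [← hmd] at hF
  obtain ⟨e, he⟩ := AddMonoidHom.exists_addEquiv_apply_eq_of_ker_eq (p := ψ.comp F.toAddMonoidHom)
    (q := diagReduction fun i => m / (m / c i)) ((hφ.comp hπ).comp F.surjective)
    (diagReduction_surjective _) (by ext y; rw [mem_ker_diagReduction, ← hF]; rfl)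
  obtain ⟨g, hg⟩ := Matrix.GeneralLinearGroup.exists_mulVec_eq F
  refine ⟨g, fun i => m / c i, fun i => Nat.div_pos (Nat.le_of_dvd hm (hcm i))
    (Nat.pos_of_dvd_of_pos (hcm i) hm), fun i j hij => Nat.div_dvd_div_left (hcm i)
    (hc_chain i j hij), fun i => Nat.div_dvd_of_dvd (hcm i), e, fun x i => ?_⟩
  obtain ⟨y, rfl⟩ := hπ x
  have hgπ : ((g : Matrix (Fin n) (Fin n) ℤ).map Int.cast).mulVec (π y) = π (F y) := by
    rw [← hg]
    funext j
    exact (RingHom.map_mulVec (Int.castRingHom (ZMod m)) _ _ j).symm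
  rw [hgπ]
  exact (congrFun (he y) i).trans (by simp [diagReduction, π])

/-- Let `m, n` be positive integers and `φ : (ℤ/mℤ)ⁿ → A` a surjective homomorphism onto a
finite abelian group `A`.  Then there exist `g ∈ GL_n(ℤ)` and positive integers
`d₁ ∣ d₂ ∣ ⋯ ∣ d_n`, each dividing `m`, together with an isomorphism
`A ≅ ⊕ᵢ ℤ/(m/dᵢ)ℤ`, such that `φ` composed with the automorphism of `(ℤ/mℤ)ⁿ` induced by
`g` becomes the componentwise reduction map. -/
theorem surjection_from_zmod_pow_normal_form
    (m n : ℕ) (hm : 0 < m) (hn : 0 < n)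
    (A : Type*) [AddCommGroup A] [Fintype A]
    (φ : (Fin n → ZMod m) →+ A) (hφ : Function.Surjective ⇑φ) :
    ∃ (g : Matrix.GeneralLinearGroup (Fin n) ℤ) (d : Fin n → ℕ),
      (∀ i, 0 < d i) ∧ (∀ i j : Fin n, i ≤ j → d i ∣ d j) ∧
      ∃ (hdm : ∀ i, d i ∣ m) (e : A ≃+ ((i : Fin n) → ZMod (m / d i))),
        ∀ (x : Fin n → ZMod m) (i : Fin n),
          e (φ (((g : Matrix (Fin n) (Fin n) ℤ).map
              (Int.cast : ℤ → ZMod m)).mulVec x)) i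
            = ZMod.castHom (Nat.div_dvd_of_dvd (hdm i)) (ZMod (m / d i)) (x i) :=
  surjection_from_zmod_pow_normal_form_general m n hm A φ hφ
end

section
/- Let Γ be a finite group and 1 → A → B → C → 1 an exact sequence of groups with Γ-action (all maps Γ-equivariant), where A is a central subgroup of B and A is a uniquely divisible abelian group. Then the induced map of nonabelian cohomology pointed sets H¹(Γ, B) → H¹(Γ, C) is bijective. -/
lemma h1v_aux {Γ A : Type*} [Group Γ] [Fintype Γ] [CommGroup A]
    (φ : Γ →* MulAut A)
    (hdiv : ∀ m : ℕ, 0 < m → Function.Bijective (fun a : A => a ^ m))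
    (a : Γ → A) (hc : ∀ γ τ, a (γ * τ) = a γ * φ γ (a τ)) :
    ∃ x : A, ∀ γ, a γ = x⁻¹ * φ γ x := by
  have hn : 0 < Fintype.card Γ := Fintype.card_pos
  set n := Fintype.card Γ with hndef
  set s : A := ∏ τ, a τ with hsdef
  have hs : ∀ γ : Γ, φ γ s = ((a γ)⁻¹) ^ n * s := by
    intro γ
    have h1 : φ γ s = ∏ τ, ((a γ)⁻¹ * a (γ * τ)) := by
      rw [hsdef, map_prod]
      exact Finset.prod_congr rfl fun τ _ => by rw [hc γ τ]; group
    have h2 : ∏ τ, a (γ * τ) = s := Fintype.prod_equiv (Equiv.mulLeft γ) _ _ (fun τ => rfl)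
    rw [h1, Finset.prod_mul_distrib, Finset.prod_const, Finset.card_univ, h2]
  obtain ⟨x, hx⟩ := (hdiv n hn).2 s⁻¹
  have hx' : x ^ n = s⁻¹ := hx
  refine ⟨x, fun γ => (hdiv n hn).1 ?_⟩
  show (a γ) ^ n = (x⁻¹ * φ γ x) ^ n
  rw [mul_pow, inv_pow, ← map_pow, hx', map_inv, hs γ, inv_pow]
  group

lemma h2v_aux {Γ A : Type*} [Group Γ] [Fintype Γ] [CommGroup A]
    (φ : Γ →* MulAut A)
    (hdiv : ∀ m : ℕ, 0 < m → Function.Bijective (fun a : A => a ^ m))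
    (a : Γ → Γ → A)
    (hc : ∀ γ τ σ, a γ τ * a (γ * τ) σ = φ γ (a τ σ) * a γ (τ * σ)) :
    ∃ y : Γ → A, ∀ γ τ, a γ τ = y γ * φ γ (y τ) * (y (γ * τ))⁻¹ := by
  have hn : 0 < Fintype.card Γ := Fintype.card_pos
  set n := Fintype.card Γ with hndef
  set x : Γ → A := fun τ => ∏ σ, a τ σ with hxdef
  have hx : ∀ γ τ, (a γ τ) ^ n * x (γ * τ) = φ γ (x τ) * x γ := by
    intro γ τ
    have h0 : ∏ σ, (a γ τ * a (γ * τ) σ) = ∏ σ, (φ γ (a τ σ) * a γ (τ * σ)) :=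
      Finset.prod_congr rfl fun σ _ => hc γ τ σ
    have h1 : ∏ σ, (a γ τ * a (γ * τ) σ) = (a γ τ) ^ n * x (γ * τ) := by
      rw [Finset.prod_mul_distrib, Finset.prod_const, Finset.card_univ]
    have h2 : ∏ σ, (φ γ (a τ σ) * a γ (τ * σ)) = φ γ (x τ) * x γ := by
      rw [Finset.prod_mul_distrib, ← map_prod]
      congr 1
      exact Fintype.prod_equiv (Equiv.mulLeft τ) _ _ (fun σ => rfl)
    rw [← h1, h0, h2]
  choose y hy using fun τ => (hdiv n hn).2 (x τ)
  have hy' : ∀ τ, (y τ) ^ n = x τ := hy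
  refine ⟨y, fun γ τ => (hdiv n hn).1 ?_⟩
  show (a γ τ) ^ n = (y γ * φ γ (y τ) * (y (γ * τ))⁻¹) ^ n
  rw [mul_pow, mul_pow, inv_pow, ← map_pow, hy', hy', hy']
  have h3 := hx γ τ
  have h4 : (a γ τ) ^ n = φ γ (x τ) * x γ * (x (γ * τ))⁻¹ := eq_mul_inv_of_mul_eq h3
  rw [h4, mul_comm (φ γ (x τ)) (x γ)]

/-- Let `Γ` be a finite group and `1 → A → B → C → 1` a `Γ`-equivariant exact sequence of
groups with `Γ`-action, where `A` is central in `B` and uniquely divisible abelian.  Then the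
induced map of nonabelian cohomology pointed sets `H¹(Γ, B) → H¹(Γ, C)` is bijective:
it is injective and surjective on cohomology classes of 1-cocycles. -/
theorem h1_bijective_of_central_uniquely_divisible
    (Γ A B C : Type*) [Group Γ] [Finite Γ] [CommGroup A] [Group B] [Group C]
    (φA : Γ →* MulAut A) (φB : Γ →* MulAut B) (φC : Γ →* MulAut C)
    (i : A →* B) (p : B →* C)
    (hi : Function.Injective ⇑i) (hp : Function.Surjective ⇑p)
    (hexact : p.ker = i.range)
    (hcentral : ∀ (a : A) (b : B), i a * b = b * i a)
    (hiequiv : ∀ (γ : Γ) (a : A), i (φA γ a) = φB γ (i a))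
    (hpequiv : ∀ (γ : Γ) (b : B), p (φB γ b) = φC γ (p b))
    (hdiv : ∀ m : ℕ, 0 < m → Function.Bijective (fun a : A => a ^ m)) :
    (∀ f g : {f : Γ → B // ∀ γ τ, f (γ * τ) = f γ * φB γ (f τ)},
        (∃ c : C, ∀ γ, p (g.1 γ) = c⁻¹ * p (f.1 γ) * φC γ c) →
        ∃ b : B, ∀ γ, g.1 γ = b⁻¹ * f.1 γ * φB γ b) ∧
    (∀ h : {h : Γ → C // ∀ γ τ, h (γ * τ) = h γ * φC γ (h τ)},
        ∃ (f : {f : Γ → B // ∀ γ τ, f (γ * τ) = f γ * φB γ (f τ)}) (c : C),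
          ∀ γ, h.1 γ = c⁻¹ * p (f.1 γ) * φC γ c) := by
  cases nonempty_fintype Γ
  have hZ : ∀ (a : A) (x : B), Commute (i a) x := fun a x => hcentral a x
  have hBmul : ∀ (γ τ : Γ) (x : B), φB (γ * τ) x = φB γ (φB τ x) := by
    intro γ τ x; rw [map_mul]; rfl
  have hpi : ∀ a : A, p (i a) = 1 := by
    intro a
    have : i a ∈ p.ker := by rw [hexact]; exact ⟨a, rfl⟩
    exact this
  constructor
  · rintro ⟨f, hf⟩ ⟨g, hg⟩ ⟨c, hcg⟩
    simp only at hcg ⊢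
    obtain ⟨b₀, hb₀⟩ := hp c
    set f' : Γ → B := fun γ => b₀⁻¹ * f γ * φB γ b₀ with hf'def
    have hf' : ∀ γ τ, f' (γ * τ) = f' γ * φB γ (f' τ) := by
      intro γ τ
      simp only [hf'def, map_mul, map_inv, hf γ τ, MulAut.mul_apply]
      group
    have hpf' : ∀ γ, p (g γ) = p (f' γ) := by
      intro γ
      simp only [hf'def, map_mul, map_inv, hb₀, hpequiv, hcg γ]
    have key : ∀ γ, ∃ a : A, g γ = i a * f' γ := by
      intro γ
      have hk : g γ * (f' γ)⁻¹ ∈ p.ker := by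
        rw [MonoidHom.mem_ker, map_mul, map_inv, hpf' γ, mul_inv_cancel]
      rw [hexact] at hk
      obtain ⟨a, ha⟩ := hk
      exact ⟨a, by rw [ha]; group⟩
    choose a ha using key
    have hacoc : ∀ γ τ, a (γ * τ) = a γ * φA γ (a τ) := by
      intro γ τ
      apply hi
      have h1 : g (γ * τ) = g γ * φB γ (g τ) := hg γ τ
      rw [ha, ha, ha, hf'] at h1
      -- h1 : i (a (γ*τ)) * (f' γ * φB γ (f' τ)) = i (a γ) * f' γ * φB γ (i (a τ) * f' τ)
      have h2 : i (a γ) * f' γ * φB γ (i (a τ) * f' τ)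
          = (i (a γ) * i (φA γ (a τ))) * (f' γ * φB γ (f' τ)) := by
        rw [map_mul, ← hiequiv]
        have hsw : f' γ * i (φA γ (a τ)) = i (φA γ (a τ)) * f' γ := (hZ _ _).eq.symm
        calc i (a γ) * f' γ * (i (φA γ (a τ)) * φB γ (f' τ))
            = i (a γ) * (f' γ * i (φA γ (a τ))) * φB γ (f' τ) := by group
          _ = i (a γ) * (i (φA γ (a τ)) * f' γ) * φB γ (f' τ) := by rw [hsw]
          _ = (i (a γ) * i (φA γ (a τ))) * (f' γ * φB γ (f' τ)) := by group
      rw [h2] at h1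
      rw [map_mul]
      exact mul_right_cancel h1
    obtain ⟨x, hx⟩ := h1v_aux φA hdiv a hacoc
    refine ⟨b₀ * i x, fun γ => ?_⟩
    have hsw : i (φA γ x) * (b₀⁻¹ * f γ * φB γ b₀) = (b₀⁻¹ * f γ * φB γ b₀) * i (φA γ x) :=
      (hZ _ _).eq
    calc g γ = i (a γ) * f' γ := ha γ
      _ = (i x)⁻¹ * (i (φA γ x) * (b₀⁻¹ * f γ * φB γ b₀)) := by
          rw [hx γ, map_mul, map_inv]; simp only [hf'def]; group
      _ = (i x)⁻¹ * ((b₀⁻¹ * f γ * φB γ b₀) * i (φA γ x)) := by rw [hsw]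
      _ = (b₀ * i x)⁻¹ * f γ * φB γ (b₀ * i x) := by
          rw [mul_inv_rev, map_mul (φB γ) b₀ (i x), ← hiequiv]; group
  · rintro ⟨h, hh⟩
    simp only at hh ⊢
    choose b hb using fun γ => hp (h γ)
    have hker : ∀ γ τ, b γ * φB γ (b τ) * (b (γ * τ))⁻¹ ∈ i.range := by
      intro γ τ
      rw [← hexact, MonoidHom.mem_ker, map_mul, map_inv, map_mul, hpequiv, hb, hb, hb,
        hh γ τ, mul_inv_cancel]
    choose aa haa using hker
    have key : ∀ γ τ σ, aa γ τ * aa (γ * τ) σ = φA γ (aa τ σ) * aa γ (τ * σ) := by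
      intro γ τ σ
      apply hi
      have e2 : i (φA γ (aa τ σ)) * i (aa γ (τ * σ))
          = b γ * (φB γ (i (aa τ σ)) * (φB γ (b (τ * σ)) * (b (γ * (τ * σ)))⁻¹)) := by
        rw [haa γ (τ * σ), hiequiv]
        have hsw : φB γ (i (aa τ σ)) * b γ = b γ * φB γ (i (aa τ σ)) := by
          rw [← hiequiv]; exact (hZ _ _).eq
        calc φB γ (i (aa τ σ)) * (b γ * φB γ (b (τ * σ)) * (b (γ * (τ * σ)))⁻¹)
            = (φB γ (i (aa τ σ)) * b γ) * (φB γ (b (τ * σ)) * (b (γ * (τ * σ)))⁻¹) := by group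
          _ = (b γ * φB γ (i (aa τ σ))) * (φB γ (b (τ * σ)) * (b (γ * (τ * σ)))⁻¹) := by rw [hsw]
          _ = b γ * (φB γ (i (aa τ σ)) * (φB γ (b (τ * σ)) * (b (γ * (τ * σ)))⁻¹)) := by group
      rw [map_mul, map_mul, e2, haa γ τ, haa (γ * τ) σ, haa τ σ, mul_assoc γ τ σ]
      simp only [map_mul, map_inv, MulAut.mul_apply]
      group
    obtain ⟨y, hy⟩ := h2v_aux φA hdiv aa key
    set f : Γ → B := fun γ => (i (y γ))⁻¹ * b γ with hfdef
    have hfcoc : ∀ γ τ, f (γ * τ) = f γ * φB γ (f τ) := by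
      intro γ τ
      simp only [hfdef]
      have hb' : b (γ * τ) = (i (aa γ τ))⁻¹ * (b γ * φB γ (b τ)) := by
        rw [haa γ τ]; group
      have hy' : i (y (γ * τ)) = (i (aa γ τ))⁻¹ * (i (y γ) * i (φA γ (y τ))) := by
        rw [← map_mul, ← map_inv, ← map_mul]
        exact congrArg i (by rw [hy γ τ]; group)
      rw [hb', hy', map_mul, map_inv, hiequiv]
      have hsw1 : (φB γ (i (y τ)))⁻¹ * (i (y γ))⁻¹ = (i (y γ))⁻¹ * (φB γ (i (y τ)))⁻¹ := by
        rw [← hiequiv]; exact ((hZ (φA γ (y τ)) ((i (y γ))⁻¹)).inv_left).eq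
      have hsw : (φB γ (i (y τ)))⁻¹ * b γ = b γ * (φB γ (i (y τ)))⁻¹ := by
        rw [← hiequiv]; exact ((hZ _ _).inv_left).eq
      calc ((i (aa γ τ))⁻¹ * (i (y γ) * φB γ (i (y τ))))⁻¹ * ((i (aa γ τ))⁻¹ * (b γ * φB γ (b τ)))
          = (φB γ (i (y τ)))⁻¹ * (i (y γ))⁻¹ * (b γ * φB γ (b τ)) := by group
        _ = (i (y γ))⁻¹ * (φB γ (i (y τ)))⁻¹ * (b γ * φB γ (b τ)) := by rw [hsw1]
        _ = (i (y γ))⁻¹ * ((φB γ (i (y τ)))⁻¹ * b γ) * φB γ (b τ) := by group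
        _ = (i (y γ))⁻¹ * (b γ * (φB γ (i (y τ)))⁻¹) * φB γ (b τ) := by rw [hsw]
        _ = (i (y γ))⁻¹ * b γ * ((φB γ (i (y τ)))⁻¹ * φB γ (b τ)) := by group
    refine ⟨⟨f, hfcoc⟩, 1, fun γ => ?_⟩
    simp only [hfdef, map_mul, map_inv, hpi, hb, map_one, inv_one, one_mul, mul_one]
end
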